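/- Weighted stability of the Bellman optimality equation. Density-MDP setup with μ(S) < ∞. Let 1 ≤ p ≤ q ≤ ∞, C_{P,p} := sup_{(s,a)} ‖P(s,a,·)‖_{L^{p/(p−1)}(μ)}, and assume γ·C_{P,p} < 1 and γ·C_{P,p}·(|A|·μ(S))^{1/p} < 1. Let d : S × A → ℝ be measurable with C_d := inf_{(s,a)} d(s,a) > 0. Let Q* be measurable with T_B Q* = Q* pointwise, and let Q be measurable with Q − Q* ∈ L^p(S × A) and d·(T_B Q − Q) ∈ L^q(S × A). Then ‖Q − Q*‖_p ≤ (|A|·μ(S))^{1/p − 1/q} / ( C_d · (1 − γ·C_{P,p}·(|A|·μ(S))^{1/p}) ) · ‖d·(T_B Q − Q)‖_q. In particular T_B Q = Q is stable from the (q, d)-weighted seminorm to L^p. -/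

import Mathlib

open MeasureTheory
open scoped ENNReal

/-!
Write `E = Q - Q*` and `B = T_B Q - Q`; since `Q* = T_B Q*`, `E = (T_B Q - T_B Q*) - B`.
By Hölder's inequality `|T_B Q - T_B Q'| ≤ γ C_{P,p} ‖max Q - max Q'‖_{L^p(μ)}` uniformly on
`S × A`, and `‖max Q - max Q'‖_{L^p(μ)} ≤ ‖Q - Q'‖_p` because the maximum over `A` is attained
and 1-Lipschitz. So `T_B` is Lipschitz on `L^p` with constant `c = γ C_{P,p} (|A| μ(S))^{1/p} < 1`,
whence `‖E‖_p ≤ ‖B‖_p + c ‖E‖_p`, i.e. `‖E‖_p ≤ ‖B‖_p / (1 - c)` as `‖E‖_p < ∞`. Finally,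
`S × A` has total mass `|A| μ(S)`, so `‖B‖_p ≤ (|A| μ(S))^{1/p - 1/q} ‖B‖_q`, and
`‖B‖_q ≤ ‖d B‖_q / C_d`.
-/

lemma exists_abs_ciSup_sub_ciSup_le {ι : Type*} [Finite ι] [Nonempty ι] (f g : ι → ℝ) :
    ∃ i, |(⨆ i, f i) - ⨆ i, g i| ≤ |f i - g i| := by
  wlog hgf : ⨆ i, g i ≤ ⨆ i, f i generalizing f g
  · obtain ⟨i, hi⟩ := this g f (le_of_not_ge hgf)
    exact ⟨i, by rwa [abs_sub_comm, abs_sub_comm (f i)]⟩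
  obtain ⟨i, hi⟩ := exists_eq_ciSup_of_finite (f := f)
  refine ⟨i, ?_⟩
  rw [abs_of_nonneg (sub_nonneg.2 hgf), ← hi]
  have := le_ciSup (Set.finite_range g).bddAbove i
  exact (sub_le_sub_left this _).trans (le_abs_self _)

lemma norm_integral_sub_integral_le {α E : Type*} [MeasurableSpace α] {μ : Measure α}
    [NormedAddCommGroup E] [NormedSpace ℝ E] {f g : α → E} (hfg : Integrable (f - g) μ) :
    ‖∫ x, f x ∂μ - ∫ x, g x ∂μ‖ ≤ ‖∫ x, (f - g) x ∂μ‖ := by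
  by_cases hg : Integrable g μ
  · have hf : Integrable f μ := by simpa using hfg.add hg
    rw [integral_sub' hf hg]
  · have hf : ¬ Integrable f μ := fun hf => hg (by simpa using hf.sub hfg)
    simp [integral_undef hf, integral_undef hg]

lemma enorm_integral_mul_le {α : Type*} [MeasurableSpace α] {μ : Measure α}
    {p q : ℝ≥0∞} [p.HolderConjugate q] {f g : α → ℝ}
    (hf : AEStronglyMeasurable f μ) (hg : AEStronglyMeasurable g μ) :
    ‖∫ x, f x * g x ∂μ‖ₑ ≤ eLpNorm f p μ * eLpNorm g q μ :=
  calc ‖∫ x, f x * g x ∂μ‖ₑ ≤ ∫⁻ x, ‖f x * g x‖ₑ ∂μ := enorm_integral_le_lintegral_enorm _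
    _ = eLpNorm (f • g) 1 μ := (eLpNorm_one_eq_lintegral_enorm).symm
    _ ≤ eLpNorm f p μ * eLpNorm g q μ := eLpNorm_smul_le_mul_eLpNorm hg hf

lemma ENNReal.le_div_one_sub_of_le_add_mul {x b c : ℝ≥0∞} (hx : x ≠ ∞) (hc : c < 1)
    (h : x ≤ b + c * x) : x ≤ b / (1 - c) := by
  rw [ENNReal.le_div_iff_mul_le (Or.inl (tsub_pos_of_lt hc).ne')
    (Or.inl (ENNReal.sub_ne_top ENNReal.one_ne_top)), mul_comm, ENNReal.sub_mul fun _ _ => hx,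
    one_mul]
  exact tsub_le_iff_right.2 h

lemma ofReal_mul_eLpNorm_le_eLpNorm_mul {α : Type*} [MeasurableSpace α] {μ : Measure α}
    {p : ℝ≥0∞} {c : ℝ} {w f : α → ℝ} (hc : 0 ≤ c) (hw : ∀ᵐ x ∂μ, c ≤ w x) :
    ENNReal.ofReal c * eLpNorm f p μ ≤ eLpNorm (fun x => w x * f x) p μ := by
  rw [← Real.enorm_eq_ofReal hc, ← eLpNorm_const_smul]
  refine eLpNorm_mono_ae (hw.mono fun x hx => ?_)
  rw [Pi.smul_apply, smul_eq_mul, norm_mul, norm_mul, Real.norm_of_nonneg hc,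
    Real.norm_of_nonneg (hc.trans hx)]
  exact mul_le_mul_of_nonneg_right hx (norm_nonneg _)

lemma eLpNorm_le_eLpNorm_mul_measure_univ_rpow {α E : Type*} [MeasurableSpace α] {μ : Measure α}
    [NormedAddCommGroup E] {p q : ℝ≥0∞} (hp : p ≠ 0) (hpq : p ≤ q) {f : α → E}
    (hf : AEStronglyMeasurable f μ) :
    eLpNorm f p μ ≤ eLpNorm f q μ * μ Set.univ ^ (1 / p - 1 / q).toReal := by
  convert eLpNorm_le_eLpNorm_mul_rpow_measure_univ hpq hf using 3
  rw [ENNReal.toReal_sub_of_le (by gcongr) (by simpa using hp), ENNReal.toReal_div,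
    ENNReal.toReal_div, ENNReal.toReal_one]

lemma eLpNorm_le_eLpNorm_prod_count {S A E F : Type*} [MeasurableSpace S] {μ : Measure S}
    [MeasurableSpace A] [Countable A] [MeasurableSingletonClass A]
    [NormedAddCommGroup E] [NormedAddCommGroup F] {p : ℝ≥0∞} {f : S × A → E} {g : S → F}
    (hf : AEStronglyMeasurable f (μ.prod Measure.count))
    (hfg : ∀ s, ∃ a, ‖g s‖ ≤ ‖f (s, a)‖) :
    eLpNorm g p μ ≤ eLpNorm f p (μ.prod Measure.count) := by
  have hfg' : ∀ s, ∃ a, ‖g s‖ₑ ≤ ‖f (s, a)‖ₑ := fun s => by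
    obtain ⟨a, ha⟩ := hfg s
    exact ⟨a, enorm_le_iff_norm_le.2 ha⟩
  rcases eq_or_ne p 0 with rfl | hp0
  · simp
  rcases eq_or_ne p ∞ with rfl | hptop
  · rw [eLpNorm_exponent_top, eLpNorm_exponent_top]
    refine essSup_le_of_ae_le _ ?_
    filter_upwards [Measure.ae_ae_of_ae_prod
      (ae_le_eLpNormEssSup (f := f) (μ := μ.prod Measure.count))] with s hs
    obtain ⟨a, ha⟩ := hfg' s
    exact ha.trans (Measure.ae_count_iff.1 hs a)
  rw [eLpNorm_eq_lintegral_rpow_enorm_toReal hp0 hptop,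
    eLpNorm_eq_lintegral_rpow_enorm_toReal hp0 hptop,
    lintegral_prod _ (hf.enorm.pow_const _)]
  gcongr with s
  obtain ⟨a, ha⟩ := hfg' s
  rw [lintegral_count]
  exact (ENNReal.rpow_le_rpow ha ENNReal.toReal_nonneg).trans
    (ENNReal.le_tsum (f := fun a => ‖f (s, a)‖ₑ ^ p.toReal) a)

lemma Measure.prod_count_univ {S A : Type*} [MeasurableSpace S] (μ : Measure S) [SFinite μ]
    [MeasurableSpace A] [Fintype A] [MeasurableSingletonClass A] :
    (μ.prod Measure.count) (Set.univ : Set (S × A)) = Fintype.card A * μ Set.univ := by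
  rw [← Set.univ_prod_univ, Measure.prod_prod, Measure.count_univ, mul_comm]
  simp

section Bellman

variable {S A : Type*} [MeasurableSpace S] (μ : Measure S) (r : S → A → ℝ) (γ : ℝ)
  (P : S → A → S → ℝ)

noncomputable def bellmanOp (Q : S → A → ℝ) (s : S) (a : A) : ℝ :=
  r s a + γ * ∫ s', (⨆ a', Q s' a') * P s a s' ∂μ

variable {μ r γ P}

lemma enorm_bellmanOp_sub_le {p p' : ℝ≥0∞} [p'.HolderConjugate p] (hγ : 0 ≤ γ)
    {Q Q' : S → A → ℝ} {s : S} {a : A} (hP : MemLp (P s a) p' μ)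
    (hV : MemLp (fun s => (⨆ a, Q s a) - ⨆ a, Q' s a) p μ) :
    ‖bellmanOp μ r γ P Q s a - bellmanOp μ r γ P Q' s a‖ₑ ≤ ENNReal.ofReal γ *
      (eLpNorm (P s a) p' μ * eLpNorm (fun s => (⨆ a, Q s a) - ⨆ a, Q' s a) p μ) := by
  set V := fun s => (⨆ a, Q s a) - ⨆ a, Q' s a
  have hPV : (fun s' => (⨆ a', Q s' a') * P s a s') - (fun s' => (⨆ a', Q' s' a') * P s a s')
      = fun s' => P s a s' * V s' := by
    funext s'
    simp only [Pi.sub_apply, V]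
    ring
  have hint := memLp_one_iff_integrable.1 (hV.mul' hP)
  rw [← hPV] at hint
  calc ‖bellmanOp μ r γ P Q s a - bellmanOp μ r γ P Q' s a‖ₑ
      = ENNReal.ofReal γ *
        ‖∫ s', (⨆ a', Q s' a') * P s a s' ∂μ - ∫ s', (⨆ a', Q' s' a') * P s a s' ∂μ‖ₑ := by
        rw [bellmanOp, bellmanOp, add_sub_add_left_eq_sub, ← mul_sub, enorm_mul,
          Real.enorm_of_nonneg hγ]
    _ ≤ ENNReal.ofReal γ * ‖∫ s', P s a s' * V s' ∂μ‖ₑ := by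
        gcongr
        rw [← hPV]
        exact enorm_le_iff_norm_le.2 (norm_integral_sub_integral_le hint)
    _ ≤ ENNReal.ofReal γ * (eLpNorm (P s a) p' μ * eLpNorm V p μ) := by
        gcongr
        exact enorm_integral_mul_le hP.1 hV.1

variable [MeasurableSpace A] [MeasurableSingletonClass A]

lemma measurable_bellmanOp [SFinite μ] [Countable A] (hr : ∀ a, Measurable fun s => r s a)
    (hP : ∀ a, Measurable fun x : S × S => P x.1 a x.2) {Q : S → A → ℝ}
    (hQ : ∀ a, Measurable fun s => Q s a) :
    Measurable fun x : S × A => bellmanOp μ r γ P Q x.1 x.2 := by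
  refine measurable_from_prod_countable_left fun a => (hr a).add (Measurable.const_mul ?_ γ)
  exact (((Measurable.iSup hQ).comp measurable_snd).mul
    (hP a)).stronglyMeasurable.integral_prod_right'.measurable

lemma eLpNorm_bellmanOp_sub_le [SFinite μ] [Fintype A] [Nonempty A] {p p' C : ℝ≥0∞}
    [p'.HolderConjugate p] (hγ : 0 ≤ γ) (hP : ∀ a, Measurable fun x : S × S => P x.1 a x.2)
    (hC : C ≠ ∞) (hPC : ∀ s a, eLpNorm (P s a) p' μ ≤ C) {Q Q' : S → A → ℝ}
    (hQ : ∀ a, Measurable fun s => Q s a) (hQ' : ∀ a, Measurable fun s => Q' s a)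
    (hmem : MemLp (fun x : S × A => Q x.1 x.2 - Q' x.1 x.2) p (μ.prod Measure.count)) :
    eLpNorm (fun x : S × A => bellmanOp μ r γ P Q x.1 x.2 - bellmanOp μ r γ P Q' x.1 x.2) p
        (μ.prod Measure.count) ≤
      ENNReal.ofReal γ * C * ((Fintype.card A : ℝ≥0∞) * μ Set.univ) ^ (1 / p).toReal *
        eLpNorm (fun x : S × A => Q x.1 x.2 - Q' x.1 x.2) p (μ.prod Measure.count) := by
  set V := fun s => (⨆ a, Q s a) - ⨆ a, Q' s a
  have hVle : eLpNorm V p μ ≤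
      eLpNorm (fun x : S × A => Q x.1 x.2 - Q' x.1 x.2) p (μ.prod Measure.count) :=
    eLpNorm_le_eLpNorm_prod_count hmem.1 fun s => exists_abs_ciSup_sub_ciSup_le _ _
  have hV : MemLp V p μ :=
    ⟨((Measurable.iSup hQ).sub (Measurable.iSup hQ')).aestronglyMeasurable,
      hVle.trans_lt hmem.2⟩
  have hPmem : ∀ s a, MemLp (P s a) p' μ := fun s a =>
    ⟨((hP a).comp measurable_prodMk_left).aestronglyMeasurable, (hPC s a).trans_lt hC.lt_top⟩
  have hpt : ∀ᵐ x ∂μ.prod Measure.count,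
      ‖bellmanOp μ r γ P Q x.1 x.2 - bellmanOp μ r γ P Q' x.1 x.2‖ₑ ≤
        ENNReal.ofReal γ * C * eLpNorm V p μ :=
    ae_of_all _ fun x => (enorm_bellmanOp_sub_le hγ (hPmem x.1 x.2) hV).trans
      (by rw [mul_assoc]; gcongr; exact hPC _ _)
  calc _ ≤ (ENNReal.ofReal γ * C * eLpNorm V p μ) •
        (μ.prod Measure.count) Set.univ ^ p.toReal⁻¹ := eLpNorm_le_of_ae_enorm_bound hpt
    _ = ENNReal.ofReal γ * C * ((Fintype.card A : ℝ≥0∞) * μ Set.univ) ^ (1 / p).toReal *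
        eLpNorm V p μ := by
      rw [Measure.prod_count_univ, smul_eq_mul, one_div, ENNReal.toReal_inv]
      ring
    _ ≤ _ := by gcongr

lemma eLpNorm_sub_le_eLpNorm_bellmanOp_sub_div [SFinite μ] [Fintype A] [Nonempty A]
    {p p' C : ℝ≥0∞} [p'.HolderConjugate p] (hp : 1 ≤ p) (hγ : 0 ≤ γ)
    (hr : ∀ a, Measurable fun s => r s a) (hP : ∀ a, Measurable fun x : S × S => P x.1 a x.2)
    (hC : C ≠ ∞) (hPC : ∀ s a, eLpNorm (P s a) p' μ ≤ C)
    (hc : ENNReal.ofReal γ * C * ((Fintype.card A : ℝ≥0∞) * μ Set.univ) ^ (1 / p).toReal < 1)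
    {Q Q' : S → A → ℝ} (hQ : ∀ a, Measurable fun s => Q s a)
    (hQ' : ∀ a, Measurable fun s => Q' s a) (hfix : ∀ s a, bellmanOp μ r γ P Q' s a = Q' s a)
    (hmem : MemLp (fun x : S × A => Q x.1 x.2 - Q' x.1 x.2) p (μ.prod Measure.count)) :
    eLpNorm (fun x : S × A => Q x.1 x.2 - Q' x.1 x.2) p (μ.prod Measure.count) ≤
      eLpNorm (fun x : S × A => bellmanOp μ r γ P Q x.1 x.2 - Q x.1 x.2) p
          (μ.prod Measure.count) /
        (1 - ENNReal.ofReal γ * C * ((Fintype.card A : ℝ≥0∞) * μ Set.univ) ^ (1 / p).toReal) := by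
  set T := bellmanOp μ r γ P
  have hTQ := measurable_bellmanOp (μ := μ) (γ := γ) hr hP hQ
  have hTQ' := measurable_bellmanOp (μ := μ) (γ := γ) hr hP hQ'
  have hTdiff : Measurable fun x : S × A => T Q x.1 x.2 - T Q' x.1 x.2 := hTQ.sub hTQ'
  have hB : Measurable fun x : S × A => T Q x.1 x.2 - Q x.1 x.2 :=
    hTQ.sub (measurable_from_prod_countable_left hQ)
  refine ENNReal.le_div_one_sub_of_le_add_mul hmem.eLpNorm_ne_top hc ?_
  calc _ = eLpNorm ((fun x : S × A => T Q x.1 x.2 - T Q' x.1 x.2) -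
        fun x => T Q x.1 x.2 - Q x.1 x.2) p (μ.prod Measure.count) := by
        congr 1; funext x; simp only [Pi.sub_apply, hfix]; ring
    _ ≤ _ := by exact eLpNorm_sub_le hTdiff.aestronglyMeasurable hB.aestronglyMeasurable hp
    _ ≤ _ := add_le_add_left (eLpNorm_bellmanOp_sub_le hγ hP hC hPC hQ hQ' hmem) _
    _ = _ := add_comm _ _

end Bellman

theorem stmt8_general {S : Type*} [MeasurableSpace S] (μ : Measure S) [IsFiniteMeasure μ]
    {A : Type*} [Fintype A] [Nonempty A] [MeasurableSpace A] [MeasurableSingletonClass A]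
    (r : S → A → ℝ) (hr : ∀ a, Measurable (fun s => r s a))
    (γ : ℝ) (hγ0 : 0 < γ)
    (P : S → A → S → ℝ)
    (hPmeas : ∀ a, Measurable (fun x : S × S => P x.1 a x.2))
    (p q p' : ℝ≥0∞) (hp : 1 ≤ p) (hpq : p ≤ q) (hp' : 1/p + 1/p' = 1)
    (C : ℝ≥0∞) (hC : C = ⨆ s, ⨆ a, eLpNorm (fun s' => P s a s') p' μ)
    (h1 : ENNReal.ofReal γ * C < 1)
    (h2 : ENNReal.ofReal γ * C * ((Fintype.card A : ℝ≥0∞) * μ Set.univ) ^ (1/p).toReal < 1)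
    (d : S → A → ℝ)
    (Cd : ℝ) (hCdpos : 0 < Cd) (hCdle : ∀ s a, Cd ≤ d s a)
    (Qstar Q : S → A → ℝ)
    (hQstarMeas : ∀ a, Measurable (fun s => Qstar s a))
    (hQMeas : ∀ a, Measurable (fun s => Q s a))
    (hfix : ∀ s a, r s a + γ * ∫ s', (⨆ a', Qstar s' a') * P s a s' ∂μ = Qstar s a)
    (hmemp : MemLp (fun x : S × A => Q x.1 x.2 - Qstar x.1 x.2) p (μ.prod Measure.count)) :
    eLpNorm (fun x : S × A => Q x.1 x.2 - Qstar x.1 x.2) p (μ.prod Measure.count) ≤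
      ((Fintype.card A : ℝ≥0∞) * μ Set.univ) ^ (1/p - 1/q).toReal /
        (ENNReal.ofReal Cd *
          (1 - ENNReal.ofReal γ * C * ((Fintype.card A : ℝ≥0∞) * μ Set.univ) ^ (1/p).toReal)) *
      eLpNorm
        (fun x : S × A =>
          d x.1 x.2 * ((r x.1 x.2 + γ * ∫ s', (⨆ a', Q s' a') * P x.1 x.2 s' ∂μ) - Q x.1 x.2))
        q (μ.prod Measure.count) := by
  set ν := μ.prod (Measure.count : Measure A)
  set N : ℝ≥0∞ := Fintype.card A * μ Set.univ
  set c := ENNReal.ofReal γ * C * N ^ (1/p).toReal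
  set B := fun x : S × A => bellmanOp μ r γ P Q x.1 x.2 - Q x.1 x.2
  change _ ≤ _ / (_ * (1 - c)) * eLpNorm (fun x => d x.1 x.2 * B x) q ν
  have : p'.HolderConjugate p := ENNReal.holderConjugate_iff.2 (by simpa [add_comm] using hp')
  have hCtop : C ≠ ∞ := fun h => by simp [h, hγ0] at h1
  have hPC : ∀ s a, eLpNorm (P s a) p' μ ≤ C := fun s a => hC ▸ le_iSup₂_of_le s a le_rfl
  have hB : Measurable B := (measurable_bellmanOp hr hPmeas hQMeas).sub
    (measurable_from_prod_countable_left hQMeas)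
  have hstable := eLpNorm_sub_le_eLpNorm_bellmanOp_sub_div hp hγ0.le hr hPmeas hCtop hPC h2
    hQMeas hQstarMeas hfix hmemp
  have hweight : eLpNorm B q ν ≤ eLpNorm (fun x => d x.1 x.2 * B x) q ν / ENNReal.ofReal Cd := by
    rw [ENNReal.le_div_iff_mul_le (by simp [hCdpos]) (by simp), mul_comm]
    exact ofReal_mul_eLpNorm_le_eLpNorm_mul hCdpos.le (ae_of_all _ fun x => hCdle x.1 x.2)
  have hpq' : eLpNorm B p ν ≤ eLpNorm B q ν * N ^ (1/p - 1/q).toReal := by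
    simpa only [ν, Measure.prod_count_univ] using
      eLpNorm_le_eLpNorm_mul_measure_univ_rpow (μ := ν) (by positivity) hpq hB.aestronglyMeasurable
  refine hstable.trans ?_
  calc _ ≤ eLpNorm (fun x => d x.1 x.2 * B x) q ν / ENNReal.ofReal Cd * N ^ (1/p - 1/q).toReal /
        (1 - c) := by gcongr; exact hpq'.trans (by gcongr)
    _ = _ := by
      generalize N ^ (1/p - 1/q).toReal = K
      rw [div_eq_mul_inv, div_eq_mul_inv, div_eq_mul_inv,
        ENNReal.mul_inv (Or.inr (by simp)) (Or.inl ENNReal.ofReal_ne_top)]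
      ring

/-- Weighted stability of the Bellman optimality equation: for a weight `d` bounded below by
`C_d > 0`, under `γ C_{P,p} < 1` and `γ C_{P,p} (|A| μ(S))^{1/p} < 1`, with `1 ≤ p ≤ q ≤ ∞` and
`p'` the conjugate exponent of `p`, the `L^p` distance of `Q` to the Bellman fixed point `Q*`
is controlled by the `(q,d)`-weighted seminorm of the Bellman error of `Q`. -/
theorem stmt8 {S : Type*} [MeasurableSpace S] (μ : Measure S) [IsFiniteMeasure μ]
    {A : Type*} [Fintype A] [Nonempty A] [MeasurableSpace A] [MeasurableSingletonClass A]
    (r : S → A → ℝ) (hr : ∀ a, Measurable (fun s => r s a))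
    (γ : ℝ) (hγ0 : 0 < γ) (hγ1 : γ < 1)
    (P : S → A → S → ℝ)
    (hPmeas : ∀ a, Measurable (fun x : S × S => P x.1 a x.2))
    (hPnonneg : ∀ s a s', 0 ≤ P s a s')
    (hPint : ∀ s a, ∫ s', P s a s' ∂μ = 1)
    (p q p' : ℝ≥0∞) (hp : 1 ≤ p) (hpq : p ≤ q) (hp' : 1/p + 1/p' = 1)
    (C : ℝ≥0∞) (hC : C = ⨆ s, ⨆ a, eLpNorm (fun s' => P s a s') p' μ)
    (h1 : ENNReal.ofReal γ * C < 1)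
    (h2 : ENNReal.ofReal γ * C * ((Fintype.card A : ℝ≥0∞) * μ Set.univ) ^ (1/p).toReal < 1)
    (d : S → A → ℝ) (hd : ∀ a, Measurable (fun s => d s a))
    (Cd : ℝ) (hCdpos : 0 < Cd) (hCdle : ∀ s a, Cd ≤ d s a)
    (Qstar Q : S → A → ℝ)
    (hQstarMeas : ∀ a, Measurable (fun s => Qstar s a))
    (hQMeas : ∀ a, Measurable (fun s => Q s a))
    (hfix : ∀ s a, r s a + γ * ∫ s', (⨆ a', Qstar s' a') * P s a s' ∂μ = Qstar s a)
    (hmemp : MemLp (fun x : S × A => Q x.1 x.2 - Qstar x.1 x.2) p (μ.prod Measure.count))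
    (hmemq : MemLp
      (fun x : S × A =>
        d x.1 x.2 * ((r x.1 x.2 + γ * ∫ s', (⨆ a', Q s' a') * P x.1 x.2 s' ∂μ) - Q x.1 x.2))
      q (μ.prod Measure.count)) :
    eLpNorm (fun x : S × A => Q x.1 x.2 - Qstar x.1 x.2) p (μ.prod Measure.count) ≤
      ((Fintype.card A : ℝ≥0∞) * μ Set.univ) ^ (1/p - 1/q).toReal /
        (ENNReal.ofReal Cd *
          (1 - ENNReal.ofReal γ * C * ((Fintype.card A : ℝ≥0∞) * μ Set.univ) ^ (1/p).toReal)) *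
      eLpNorm
        (fun x : S × A =>
          d x.1 x.2 * ((r x.1 x.2 + γ * ∫ s', (⨆ a', Q s' a') * P x.1 x.2 s' ∂μ) - Q x.1 x.2))
        q (μ.prod Measure.count) :=
  stmt8_general μ r hr γ hγ0 P hPmeas p q p' hp hpq hp' C hC h1 h2 d Cd hCdpos hCdle Qstar Q
    hQstarMeas hQMeas hfix hmemp
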